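/- arXiv:1803.05326 — 2 statements merged into one kernel-verified Lean document; each statement's English description precedes it below -/
import Mathlib

section
/- Let Γ ↷ X and Λ ↷ Y be topologically free actions of countable discrete groups on second-countable locally compact Hausdorff spaces, and let (h, φ, η) be a continuous orbit equivalence from (X, Γ) to (Y, Λ). Then for every x ∈ X: φ(x, γγ') = φ(x,γ) φ(xγ, γ') for all γ, γ' ∈ Γ; the map θ_x := φ(x, ·) : Γ → Λ is a bijection carrying the identity e_Γ to the identity e_Λ; and θ_x restricts to a bijection Stab(x) → Stab(h(x)) and to a bijection Stab^ess(x) → Stab^ess(h(x)). -/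
open Set

variable {X Y Γ Λ : Type*}

/-- The stabilizer of `x` for a right action `a : X → Γ → X`. -/
def Stab (a : X → Γ → X) (x : X) : Set Γ := {γ | a x γ = x}

/-- The essential stabilizer of `x`: elements acting as the identity on a
neighbourhood of `x`. -/
def StabEss [TopologicalSpace X] (a : X → Γ → X) (x : X) : Set Γ :=
  {γ | ∃ U : Set X, IsOpen U ∧ x ∈ U ∧ ∀ y ∈ U, a y γ = y}

/-- The action is topologically free if the points with trivial stabilizer are dense. -/
def TopFree [TopologicalSpace X] [One Γ] (a : X → Γ → X) : Prop :=
  Dense {x : X | ∀ γ : Γ, a x γ = x → γ = 1}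

/-- `φ : X × Γ → Λ` is a cocycle for the action `a`. -/
def IsCocycle [Mul Γ] [Mul Λ] (a : X → Γ → X) (φ : X × Γ → Λ) : Prop :=
  ∀ (x : X) (γ γ' : Γ), φ (x, γ * γ') = φ (x, γ) * φ (a x γ, γ')

/-- `(h, φ, η)` is a continuous orbit equivalence between the right actions
`a : X → Γ → X` and `b : Y → Λ → Y`. -/
def IsCOE [TopologicalSpace X] [TopologicalSpace Y] [TopologicalSpace Γ] [TopologicalSpace Λ]
    (a : X → Γ → X) (b : Y → Λ → Y) (h : X ≃ₜ Y) (φ : X × Γ → Λ) (η : Y × Λ → Γ) : Prop :=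
  Continuous φ ∧ Continuous η ∧
    (∀ (x : X) (γ : Γ), h (a x γ) = b (h x) (φ (x, γ))) ∧
    (∀ (y : Y) (lam : Λ), h.symm (b y lam) = a (h.symm y) (η (y, lam)))

/-- `(h, φ)` preserves stabilizers. -/
def PreservesStab [TopologicalSpace X] [TopologicalSpace Y]
    (a : X → Γ → X) (b : Y → Λ → Y) (h : X ≃ₜ Y) (φ : X × Γ → Λ) : Prop :=
  ∀ x : X, Set.BijOn (fun γ => φ (x, γ)) (Stab a x) (Stab b (h x))

/-- `(h, φ)` preserves essential stabilizers. -/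
def PreservesStabEss [TopologicalSpace X] [TopologicalSpace Y]
    (a : X → Γ → X) (b : Y → Λ → Y) (h : X ≃ₜ Y) (φ : X × Γ → Λ) : Prop :=
  ∀ x : X, Set.BijOn (fun γ => φ (x, γ)) (StabEss a x) (StabEss b (h x))

theorem stmt3 [TopologicalSpace X] [SecondCountableTopology X] [LocallyCompactSpace X] [T2Space X]
    [TopologicalSpace Y] [SecondCountableTopology Y] [LocallyCompactSpace Y] [T2Space Y]
    [Group Γ] [Countable Γ] [TopologicalSpace Γ] [DiscreteTopology Γ]
    [Group Λ] [Countable Λ] [TopologicalSpace Λ] [DiscreteTopology Λ]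
    (a : X → Γ → X) (b : Y → Λ → Y)
    (ha1 : ∀ x : X, a x 1 = x) (ha2 : ∀ (x : X) (γ γ' : Γ), a (a x γ) γ' = a x (γ * γ'))
    (hacont : Continuous fun p : X × Γ => a p.1 p.2)
    (hb1 : ∀ y : Y, b y 1 = y) (hb2 : ∀ (y : Y) (lam mu : Λ), b (b y lam) mu = b y (lam * mu))
    (hbcont : Continuous fun p : Y × Λ => b p.1 p.2)
    (hfreeX : TopFree a) (hfreeY : TopFree b)
    (h : X ≃ₜ Y) (φ : X × Γ → Λ) (η : Y × Λ → Γ)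
    (hcoe : IsCOE a b h φ η) :
    ∀ x : X,
      (∀ γ γ' : Γ, φ (x, γ * γ') = φ (x, γ) * φ (a x γ, γ')) ∧
      Function.Bijective (fun γ : Γ => φ (x, γ)) ∧
      φ (x, 1) = 1 ∧
      Set.BijOn (fun γ : Γ => φ (x, γ)) (Stab a x) (Stab b (h x)) ∧
      Set.BijOn (fun γ : Γ => φ (x, γ)) (StabEss a x) (StabEss b (h x)) := by
  obtain ⟨hφc, hηc, hhφ, hhη⟩ := hcoe
  -- free points
  have hcancelX : ∀ x ∈ {x : X | ∀ γ : Γ, a x γ = x → γ = 1},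
      ∀ g1 g2 : Γ, a x g1 = a x g2 → g1 = g2 := by
    intro x hx g1 g2 he
    have h2 : a x (g2 * g1⁻¹) = x := by
      have := congrArg (fun z => a z g1⁻¹) he
      simp only [ha2] at this
      simpa [mul_inv_cancel, ha1] using this.symm
    exact (mul_inv_eq_one.mp (hx _ h2)).symm
  have hcancelY : ∀ y ∈ {y : Y | ∀ lam : Λ, b y lam = y → lam = 1},
      ∀ l1 l2 : Λ, b y l1 = b y l2 → l1 = l2 := by
    intro y hy l1 l2 he
    have h2 : b y (l2 * l1⁻¹) = y := by
      have := congrArg (fun z => b z l1⁻¹) he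
      simp only [hb2] at this
      simpa [mul_inv_cancel, hb1] using this.symm
    exact (mul_inv_eq_one.mp (hy _ h2)).symm
  have hdX : Dense {x : X | ∀ γ : Γ, a x γ = x → γ = 1} := hfreeX
  have hdYpre : Dense (h ⁻¹' {y : Y | ∀ lam : Λ, b y lam = y → lam = 1}) :=
    hfreeY.preimage h.isOpenMap
  -- continuity helpers
  have hcφ : ∀ γ : Γ, Continuous fun x : X => φ (x, γ) := fun γ =>
    hφc.comp (continuous_id.prodMk continuous_const)
  have hca : ∀ γ : Γ, Continuous fun x : X => a x γ := fun γ =>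
    hacont.comp (continuous_id.prodMk continuous_const)
  have hcη : ∀ lam : Λ, Continuous fun y : Y => η (y, lam) := fun lam =>
    hηc.comp (continuous_id.prodMk continuous_const)
  -- cocycle identity
  have hcoc : ∀ (x : X) (γ γ' : Γ), φ (x, γ * γ') = φ (x, γ) * φ (a x γ, γ') := by
    intro x γ γ'
    have hcont1 : Continuous fun x : X => φ (x, γ * γ') := hcφ _
    have hcont2 : Continuous fun x : X => φ (x, γ) * φ (a x γ, γ') := by
      have : Continuous fun p : Λ × Λ => p.1 * p.2 := continuous_of_discreteTopology
      exact this.comp ((hcφ γ).prodMk ((hcφ γ').comp (hca γ)))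
    have := Continuous.ext_on hdYpre hcont1 hcont2 ?_
    · exact congrFun this x
    intro x hx
    refine hcancelY (h x) hx _ _ ?_
    calc b (h x) (φ (x, γ * γ')) = h (a x (γ * γ')) := (hhφ x _).symm
      _ = h (a (a x γ) γ') := by rw [ha2]
      _ = b (h (a x γ)) (φ (a x γ, γ')) := hhφ _ _
      _ = b (b (h x) (φ (x, γ))) (φ (a x γ, γ')) := by rw [hhφ]
      _ = b (h x) (φ (x, γ) * φ (a x γ, γ')) := hb2 _ _ _
  -- η ∘ φ = id
  have hηφ : ∀ (x : X) (γ : Γ), η (h x, φ (x, γ)) = γ := by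
    intro x γ
    have hcont1 : Continuous fun x : X => η (h x, φ (x, γ)) :=
      hηc.comp ((h.continuous.comp continuous_id).prodMk (hcφ γ))
    have := Continuous.ext_on hdX hcont1 (continuous_const : Continuous fun _ : X => γ) ?_
    · exact congrFun this x
    intro x hx
    refine hcancelX x hx _ _ ?_
    calc a x (η (h x, φ (x, γ))) = a (h.symm (h x)) (η (h x, φ (x, γ))) := by
          rw [h.symm_apply_apply]
      _ = h.symm (b (h x) (φ (x, γ))) := (hhη _ _).symm
      _ = h.symm (h (a x γ)) := by rw [hhφ]
      _ = a x γ := h.symm_apply_apply _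
  -- φ ∘ η = id
  have hφη : ∀ (y : Y) (lam : Λ), φ (h.symm y, η (y, lam)) = lam := by
    intro y lam
    have hcont1 : Continuous fun y : Y => φ (h.symm y, η (y, lam)) :=
      hφc.comp ((h.symm.continuous).prodMk (hcη lam))
    have := Continuous.ext_on hfreeY hcont1 (continuous_const : Continuous fun _ : Y => lam) ?_
    · exact congrFun this y
    intro y hy
    refine hcancelY y hy _ _ ?_
    calc b y (φ (h.symm y, η (y, lam))) = b (h (h.symm y)) (φ (h.symm y, η (y, lam))) := by
          rw [h.apply_symm_apply]
      _ = h (a (h.symm y) (η (y, lam))) := (hhφ _ _).symm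
      _ = h (h.symm (b y lam)) := by rw [hhη]
      _ = b y lam := h.apply_symm_apply _
  intro x
  have hφη' : ∀ lam : Λ, φ (x, η (h x, lam)) = lam := by
    intro lam
    have := hφη (h x) lam
    rwa [h.symm_apply_apply] at this
  have hbij : Function.Bijective (fun γ : Γ => φ (x, γ)) := by
    refine Function.bijective_iff_has_inverse.mpr ⟨fun lam => η (h x, lam), ?_, ?_⟩
    · intro γ; exact hηφ x γ
    · intro lam; exact hφη' lam
  have hone : φ (x, 1) = 1 := by
    have := hcoc x 1 1
    rw [mul_one, ha1] at this
    exact (left_eq_mul.mp this)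
  refine ⟨hcoc x, hbij, hone, ?_, ?_⟩
  · -- Stab
    refine ⟨?_, hbij.1.injOn, ?_⟩
    · intro γ hγ
      show b (h x) (φ (x, γ)) = h x
      rw [← hhφ, hγ]
    · intro lam hlam
      refine ⟨η (h x, lam), ?_, hφη' lam⟩
      show a x (η (h x, lam)) = x
      have := hhη (h x) lam
      rw [hlam] at this
      simpa [h.symm_apply_apply] using this.symm
  · -- StabEss
    refine ⟨?_, hbij.1.injOn, ?_⟩
    · rintro γ ⟨U, hU, hxU, hfix⟩
      refine ⟨h.symm ⁻¹' (U ∩ (fun x' => φ (x', γ)) ⁻¹' {φ (x, γ)}), ?_, ?_, ?_⟩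
      · exact (hU.inter ((hcφ γ).isOpen_preimage _ (isOpen_discrete _))).preimage
          h.symm.continuous
      · simp only [mem_preimage, h.symm_apply_apply, mem_inter_iff, mem_singleton_iff]
        exact ⟨hxU, trivial⟩
      · rintro y ⟨hy1, hy2⟩
        have hy2' : φ (h.symm y, γ) = φ (x, γ) := hy2
        have : b (h (h.symm y)) (φ (h.symm y, γ)) = h (h.symm y) := by
          rw [← hhφ, hfix _ hy1]
        rw [h.apply_symm_apply] at this
        show b y (φ (x, γ)) = y
        rw [← hy2']
        exact this
    · rintro lam ⟨V, hV, hxV, hfix⟩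
      refine ⟨η (h x, lam), ⟨h ⁻¹' (V ∩ (fun y => η (y, lam)) ⁻¹' {η (h x, lam)}), ?_, ?_, ?_⟩,
        hφη' lam⟩
      · exact (hV.inter ((hcη lam).isOpen_preimage _ (isOpen_discrete _))).preimage
          h.continuous
      · exact ⟨hxV, rfl⟩
      · rintro x' ⟨hx1, hx2⟩
        have hx2' : η (h x', lam) = η (h x, lam) := hx2
        have := hhη (h x') lam
        rw [hfix _ hx1, h.symm_apply_apply, hx2'] at this
        exact this.symm
end

section
/- Let Γ ↷ X and Λ ↷ Y be actions of countable discrete groups on second-countable locally compact Hausdorff spaces such that Stab^ess(x) is a torsion-free abelian subgroup of Γ for every x ∈ X and Stab^ess(y) is a torsion-free abelian subgroup of Λ for every y ∈ Y, and let h : X → Y be a homeomorphism. Then the following are equivalent: (a) there exist continuous cocycles φ : X × Γ → Λ and η : Y × Λ → Γ such that (h, φ, η) is a continuous orbit equivalence from (X,Γ) to (Y,Λ) and both (h, φ) and (h⁻¹, η) preserve essential stabilizers; (b) there exists a continuous map φ : X × Γ → Λ such that the map Θ(x,γ) := (h(x), φ(x,γ)) is an isomorphism of the transformation groupoids X ⋊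 Γ and Y ⋊ Λ, i.e. Θ is a bijection with continuous inverse satisfying h(xγ) = h(x)φ(x,γ) and φ(x,γγ') = φ(x,γ)φ(xγ,γ') for all x, γ, γ'. -/
open Set

variable {X Y Γ Λ : Type*}

lemma fix_of_mem_stabEss [TopologicalSpace X] {a : X → Γ → X} {x : X} {γ : Γ}
    (hm : γ ∈ StabEss a x) : a x γ = x := by
  obtain ⟨U, -, hxU, hU⟩ := hm
  exact hU x hxU

lemma one_mem_stabEss [TopologicalSpace X] [One Γ] {a : X → Γ → X}
    (ha1 : ∀ x : X, a x 1 = x) (x : X) : (1 : Γ) ∈ StabEss a x :=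
  ⟨univ, isOpen_univ, mem_univ x, fun y _ => ha1 y⟩

lemma inv_mem_stabEss [TopologicalSpace X] [Group Γ] {a : X → Γ → X}
    (ha1 : ∀ x : X, a x 1 = x)
    (ha2 : ∀ (x : X) (γ γ' : Γ), a (a x γ) γ' = a x (γ * γ')) {x : X} {γ : Γ}
    (hm : γ ∈ StabEss a x) : γ⁻¹ ∈ StabEss a x := by
  obtain ⟨U, hUo, hxU, hU⟩ := hm
  refine ⟨U, hUo, hxU, fun y hy => ?_⟩
  have h2 := ha2 y γ γ⁻¹
  rw [hU y hy, mul_inv_cancel, ha1] at h2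
  exact h2

lemma mul_mem_stabEss [TopologicalSpace X] [Group Γ] {a : X → Γ → X}
    (ha2 : ∀ (x : X) (γ γ' : Γ), a (a x γ) γ' = a x (γ * γ')) {x : X} {γ γ' : Γ}
    (hm : γ ∈ StabEss a x) (hm' : γ' ∈ StabEss a x) : γ * γ' ∈ StabEss a x := by
  obtain ⟨U, hUo, hxU, hU⟩ := hm
  obtain ⟨V, hVo, hxV, hV⟩ := hm'
  refine ⟨U ∩ V, hUo.inter hVo, ⟨hxU, hxV⟩, fun y hy => ?_⟩
  have h2 := ha2 y γ γ'
  rw [hU y hy.1] at h2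
  rw [← h2]
  exact hV y hy.2

lemma isCocycle_one [Group Γ] [Group Λ] {a : X → Γ → X}
    (ha1 : ∀ x : X, a x 1 = x) {φ : X × Γ → Λ} (hφ : IsCocycle a φ) (x : X) :
    φ (x, (1 : Γ)) = 1 := by
  have h1 := hφ x 1 1
  rw [one_mul, ha1] at h1
  have h2 : φ (x, (1 : Γ)) * 1 = φ (x, (1 : Γ)) * φ (x, (1 : Γ)) := by
    rw [mul_one]; exact h1
  exact (mul_left_cancel h2).symm

theorem stmt6 [TopologicalSpace X] [SecondCountableTopology X] [LocallyCompactSpace X] [T2Space X]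
    [TopologicalSpace Y] [SecondCountableTopology Y] [LocallyCompactSpace Y] [T2Space Y]
    [Group Γ] [Countable Γ] [TopologicalSpace Γ] [DiscreteTopology Γ]
    [Group Λ] [Countable Λ] [TopologicalSpace Λ] [DiscreteTopology Λ]
    (a : X → Γ → X) (b : Y → Λ → Y)
    (ha1 : ∀ x : X, a x 1 = x) (ha2 : ∀ (x : X) (γ γ' : Γ), a (a x γ) γ' = a x (γ * γ'))
    (hacont : Continuous fun p : X × Γ => a p.1 p.2)
    (hb1 : ∀ y : Y, b y 1 = y) (hb2 : ∀ (y : Y) (lam mu : Λ), b (b y lam) mu = b y (lam * mu))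
    (hbcont : Continuous fun p : Y × Λ => b p.1 p.2)
    -- the essential stabilizers are abelian ...
    (habX : ∀ (x : X), ∀ γ ∈ StabEss a x, ∀ γ' ∈ StabEss a x, γ * γ' = γ' * γ)
    (habY : ∀ (y : Y), ∀ lam ∈ StabEss b y, ∀ mu ∈ StabEss b y, lam * mu = mu * lam)
    -- ... and torsion-free
    (htfX : ∀ (x : X), ∀ γ ∈ StabEss a x, ∀ n : ℕ, 0 < n → γ ^ n = 1 → γ = 1)
    (htfY : ∀ (y : Y), ∀ lam ∈ StabEss b y, ∀ n : ℕ, 0 < n → lam ^ n = 1 → lam = 1)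
    (h : X ≃ₜ Y) :
    (∃ (φ : X × Γ → Λ) (η : Y × Λ → Γ),
        IsCocycle a φ ∧ IsCocycle b η ∧ IsCOE a b h φ η ∧
        PreservesStabEss a b h φ ∧ PreservesStabEss b a h.symm η) ↔
    (∃ φ : X × Γ → Λ, Continuous φ ∧
        Function.Bijective (fun p : X × Γ => ((h p.1, φ p) : Y × Λ)) ∧
        (∃ Ξ : Y × Λ → X × Γ, Continuous Ξ ∧ ∀ p : X × Γ, Ξ (h p.1, φ p) = p) ∧
        (∀ (x : X) (γ : Γ), h (a x γ) = b (h x) (φ (x, γ))) ∧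
        IsCocycle a φ) := by
  constructor
  · -- forward direction
    rintro ⟨φ, η, hφc, hηc, ⟨hφcont, hηcont, hco1, hco2⟩, hPφ, hPη⟩
    -- key computation 1: the defect on the X side fixes points
    have key1 : ∀ (x : X) (γ : Γ), a x (η (h x, φ (x, γ)) * γ⁻¹) = x := by
      intro x γ
      have hfix : a x (η (h x, φ (x, γ))) = a x γ := by
        have h1 := hco2 (h x) (φ (x, γ))
        rw [← hco1 x γ] at h1
        simp only [Homeomorph.symm_apply_apply] at h1
        exact h1.symm
      calc a x (η (h x, φ (x, γ)) * γ⁻¹)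
          = a (a x (η (h x, φ (x, γ)))) γ⁻¹ := (ha2 x _ γ⁻¹).symm
        _ = a (a x γ) γ⁻¹ := by rw [hfix]
        _ = a x (γ * γ⁻¹) := ha2 x γ γ⁻¹
        _ = x := by rw [mul_inv_cancel, ha1]
    -- the defect lies in the essential stabilizer
    have hdelta : ∀ (x : X) (γ : Γ), η (h x, φ (x, γ)) * γ⁻¹ ∈ StabEss a x := by
      intro x γ
      refine ⟨{x' | η (h x', φ (x', γ)) = η (h x, φ (x, γ))}, ?_, rfl, fun y hy => ?_⟩
      · exact IsOpen.preimage
          (hηcont.comp ((h.continuous).prodMk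
            (hφcont.comp (continuous_id.prodMk continuous_const))))
          (isOpen_discrete {η (h x, φ (x, γ))})
      · have h1 := key1 y γ
        rwa [hy] at h1
    -- injectivity of Θ
    have hinj : Function.Injective (fun p : X × Γ => ((h p.1, φ p) : Y × Λ)) := by
      rintro ⟨x, γ⟩ ⟨x', γ'⟩ hpq
      simp only [Prod.mk.injEq] at hpq
      obtain ⟨hx, hφeq⟩ := hpq
      have hxx : x = x' := h.injective hx
      subst hxx
      have hδ := hdelta x γ
      have hδ' := hdelta x γ'
      have hε : γ' * γ⁻¹ ∈ StabEss a x := by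
        have heq : γ' * γ⁻¹ =
            (η (h x, φ (x, γ')) * γ'⁻¹)⁻¹ * (η (h x, φ (x, γ)) * γ⁻¹) := by
          rw [hφeq]; group
        rw [heq]
        exact mul_mem_stabEss ha2 (inv_mem_stabEss ha1 ha2 hδ') hδ
      have hεfix : a x (γ' * γ⁻¹) = x := fix_of_mem_stabEss hε
      have h1 : φ (x, γ') = φ (x, γ' * γ⁻¹) * φ (x, γ) := by
        have h2 := hφc x (γ' * γ⁻¹) γ
        rw [hεfix, inv_mul_cancel_right] at h2
        exact h2
      have h3 : φ (x, γ' * γ⁻¹) = φ (x, (1 : Γ)) := by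
        rw [isCocycle_one ha1 hφc x]
        have h4 : φ (x, γ) = φ (x, γ' * γ⁻¹) * φ (x, γ) := by rw [← h1, hφeq]
        have h5 : (1 : Λ) * φ (x, γ) = φ (x, γ' * γ⁻¹) * φ (x, γ) := by
          rw [one_mul]; exact h4
        exact (mul_right_cancel h5).symm
      have h6 : γ' * γ⁻¹ = (1 : Γ) :=
        (hPφ x).2.1 hε (one_mem_stabEss ha1 x) h3
      have h7 : γ = γ' := (mul_inv_eq_one.mp h6).symm
      rw [h7]
    -- key computation 2: the defect on the Y side fixes points
    have key2 : ∀ (y : Y) (lam : Λ), b y (φ (h.symm y, η (y, lam)) * lam⁻¹) = y := by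
      intro y lam
      have e1 := hco1 (h.symm y) (η (y, lam))
      rw [← hco2 y lam] at e1
      simp only [Homeomorph.apply_symm_apply] at e1
      calc b y (φ (h.symm y, η (y, lam)) * lam⁻¹)
          = b (b y (φ (h.symm y, η (y, lam)))) lam⁻¹ := (hb2 y _ lam⁻¹).symm
        _ = b (b y lam) lam⁻¹ := by rw [← e1]
        _ = b y (lam * lam⁻¹) := hb2 y lam lam⁻¹
        _ = y := by rw [mul_inv_cancel, hb1]
    have heps : ∀ (y : Y) (lam : Λ), φ (h.symm y, η (y, lam)) * lam⁻¹ ∈ StabEss b y := by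
      intro y lam
      refine ⟨{y' | φ (h.symm y', η (y', lam)) = φ (h.symm y, η (y, lam))}, ?_, rfl,
        fun y' hy' => ?_⟩
      · exact IsOpen.preimage
          (hφcont.comp ((h.symm.continuous).prodMk
            (hηcont.comp (continuous_id.prodMk continuous_const))))
          (isOpen_discrete {φ (h.symm y, η (y, lam))})
      · have h1 := key2 y' lam
        rwa [hy'] at h1
    -- surjectivity of Θ
    have hsurj : Function.Surjective (fun p : X × Γ => ((h p.1, φ p) : Y × Λ)) := by
      rintro ⟨y, lam⟩
      have hεinv : (φ (h.symm y, η (y, lam)) * lam⁻¹)⁻¹ ∈ StabEss b (h (h.symm y)) := by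
        rw [h.apply_symm_apply]
        exact inv_mem_stabEss hb1 hb2 (heps y lam)
      obtain ⟨σ, hσE, hσ⟩ := (hPφ (h.symm y)).2.2 hεinv
      have hσfix : a (h.symm y) σ = h.symm y := fix_of_mem_stabEss hσE
      refine ⟨(h.symm y, σ * η (y, lam)), ?_⟩
      have hφval : φ (h.symm y, σ * η (y, lam)) = lam := by
        have h1 := hφc (h.symm y) σ (η (y, lam))
        rw [hσfix] at h1
        have hσ' : φ (h.symm y, σ) = (φ (h.symm y, η (y, lam)) * lam⁻¹)⁻¹ := hσ
        rw [h1, hσ', mul_inv_rev, inv_inv, mul_assoc, inv_mul_cancel, mul_one]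
      simp only [Prod.mk.injEq]
      exact ⟨h.apply_symm_apply y, hφval⟩
    have hbij : Function.Bijective (fun p : X × Γ => ((h p.1, φ p) : Y × Λ)) :=
      ⟨hinj, hsurj⟩
    -- the inverse map
    set Ξ0 : Y × Λ → X × Γ := Function.surjInv hsurj with hΞ0
    have hΞleft : ∀ p : X × Γ, Ξ0 (h p.1, φ p) = p := fun p =>
      Function.leftInverse_surjInv hbij p
    have hΞcont : Continuous Ξ0 := by
      rw [continuous_iff_continuousAt]
      intro q
      obtain ⟨⟨x₀, γ₀⟩, rfl⟩ := hsurj q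
      set W : Set (Y × Λ) :=
        {q' : Y × Λ | φ (h.symm q'.1, γ₀) = φ (x₀, γ₀)} ∩
          {q' : Y × Λ | q'.2 = φ (x₀, γ₀)} with hW
      have hWo : IsOpen W := by
        refine IsOpen.inter ?_ ?_
        · exact IsOpen.preimage
            (hφcont.comp ((h.symm.continuous.comp continuous_fst).prodMk
              continuous_const))
            (isOpen_discrete {φ (x₀, γ₀)})
        · exact IsOpen.preimage continuous_snd (isOpen_discrete {φ (x₀, γ₀)})
      have hmem : ((fun p : X × Γ => ((h p.1, φ p) : Y × Λ)) (x₀, γ₀)) ∈ W := by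
        constructor
        · show φ (h.symm (h x₀), γ₀) = φ (x₀, γ₀)
          rw [h.symm_apply_apply]
        · rfl
      have hEqOn : Set.EqOn Ξ0 (fun q' : Y × Λ => ((h.symm q'.1, γ₀) : X × Γ)) W := by
        intro q' hq'
        have h1 := hΞleft (h.symm q'.1, γ₀)
        simp only [Homeomorph.apply_symm_apply] at h1
        rw [hq'.1, ← hq'.2, Prod.mk.eta] at h1
        exact h1
      have hcont2 : ContinuousAt (fun q' : Y × Λ => ((h.symm q'.1, γ₀) : X × Γ))
          ((fun p : X × Γ => ((h p.1, φ p) : Y × Λ)) (x₀, γ₀)) :=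
        ((h.symm.continuous.comp continuous_fst).prodMk continuous_const).continuousAt
      exact hcont2.congr
        (Filter.eventuallyEq_of_mem (hWo.mem_nhds hmem) hEqOn).symm
    exact ⟨φ, hφcont, hbij, ⟨Ξ0, hΞcont, hΞleft⟩, hco1, hφc⟩
  · -- backward direction
    rintro ⟨φ, hφcont, hbij, ⟨Ξ, hΞcont, hΞ⟩, hequiv, hcoc⟩
    have hright : ∀ (y : Y) (lam : Λ), φ (h.symm y, (Ξ (y, lam)).2) = lam := by
      intro y lam
      obtain ⟨p, hp⟩ := hbij.2 (y, lam)
      have h1 : h p.1 = y := congrArg Prod.fst hp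
      have h2 : φ p = lam := congrArg Prod.snd hp
      have h3 : Ξ (y, lam) = p := by rw [← hp]; exact hΞ p
      rw [h3, ← h1, h.symm_apply_apply, Prod.mk.eta]
      exact h2
    have hleft : ∀ (x : X) (γ : Γ), (Ξ (h x, φ (x, γ))).2 = γ := by
      intro x γ
      exact congrArg Prod.snd (hΞ (x, γ))
    have hcoe2 : ∀ (y : Y) (lam : Λ),
        h.symm (b y lam) = a (h.symm y) ((Ξ (y, lam)).2) := by
      intro y lam
      have e1 := hequiv (h.symm y) ((Ξ (y, lam)).2)
      rw [h.apply_symm_apply, hright y lam] at e1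
      rw [← e1, h.symm_apply_apply]
    -- φ maps essential stabilizers into essential stabilizers
    have hφmaps : ∀ (x : X) (γ : Γ), γ ∈ StabEss a x → φ (x, γ) ∈ StabEss b (h x) := by
      rintro x γ ⟨U, hUo, hxU, hU⟩
      refine ⟨h '' (U ∩ {x' | φ (x', γ) = φ (x, γ)}), ?_, ⟨x, ⟨hxU, rfl⟩, rfl⟩, ?_⟩
      · exact h.isOpenMap _ (hUo.inter (IsOpen.preimage
          (hφcont.comp (continuous_id.prodMk continuous_const))
          (isOpen_discrete {φ (x, γ)})))
      · rintro y ⟨x', ⟨hx'U, hx'φ⟩, rfl⟩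
        rw [← hx'φ, ← hequiv, hU x' hx'U]
    -- η maps essential stabilizers into essential stabilizers
    have hηmaps : ∀ (y : Y) (lam : Λ), lam ∈ StabEss b y →
        (Ξ (y, lam)).2 ∈ StabEss a (h.symm y) := by
      rintro y lam ⟨V, hVo, hyV, hV⟩
      refine ⟨h ⁻¹' (V ∩ {y' | (Ξ (y', lam)).2 = (Ξ (y, lam)).2}), ?_, ?_, ?_⟩
      · exact IsOpen.preimage h.continuous (hVo.inter (IsOpen.preimage
          ((continuous_snd.comp hΞcont).comp (continuous_id.prodMk continuous_const))
          (isOpen_discrete {(Ξ (y, lam)).2})))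
      · refine ⟨?_, ?_⟩
        · rw [h.apply_symm_apply]; exact hyV
        · show (Ξ (h (h.symm y), lam)).2 = (Ξ (y, lam)).2
          rw [h.apply_symm_apply]
      · rintro x' ⟨hx'V, hx'η⟩
        rw [← hx'η]
        have h1 := hcoe2 (h x') lam
        rw [hV (h x') hx'V, h.symm_apply_apply] at h1
        exact h1.symm
    refine ⟨φ, fun q : Y × Λ => (Ξ q).2, hcoc, ?_, ?_, ?_, ?_⟩
    · -- IsCocycle b η
      intro y lam mu
      show (Ξ (y, lam * mu)).2 = (Ξ (y, lam)).2 * (Ξ (b y lam, mu)).2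
      have e1 : φ (h.symm y, (Ξ (y, lam)).2 * (Ξ (b y lam, mu)).2) = lam * mu := by
        rw [hcoc, hright y lam, ← hcoe2 y lam, hright (b y lam) mu]
      have e2 := hΞ (h.symm y, (Ξ (y, lam)).2 * (Ξ (b y lam, mu)).2)
      simp only [Homeomorph.apply_symm_apply] at e2
      rw [e1] at e2
      exact congrArg Prod.snd e2
    · -- IsCOE
      exact ⟨hφcont, continuous_snd.comp hΞcont, hequiv, hcoe2⟩
    · -- PreservesStabEss a b h φ
      intro x
      refine ⟨fun γ hγ => hφmaps x γ hγ, fun γ _ γ' _ hh => ?_, fun lam hlam => ?_⟩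
      · have h3 : ((x, γ) : X × Γ) = (x, γ') := by
          apply hbij.1
          show ((h x, φ (x, γ)) : Y × Λ) = (h x, φ (x, γ'))
          rw [show φ (x, γ) = φ (x, γ') from hh]
        exact congrArg Prod.snd h3
      · refine ⟨(Ξ (h x, lam)).2, ?_, ?_⟩
        · have h1 := hηmaps (h x) lam hlam
          rwa [h.symm_apply_apply] at h1
        · show φ (x, (Ξ (h x, lam)).2) = lam
          have h1 := hright (h x) lam
          rwa [h.symm_apply_apply] at h1
    · -- PreservesStabEss b a h.symm η
      intro y
      refine ⟨fun lam hlam => hηmaps y lam hlam, fun lam _ mu _ hh => ?_, fun γ hγ => ?_⟩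
      · have h1 := hright y lam
        have h2 := hright y mu
        rw [← h1, ← h2]
        show φ (h.symm y, (Ξ (y, lam)).2) = φ (h.symm y, (Ξ (y, mu)).2)
        rw [show (Ξ (y, lam)).2 = (Ξ (y, mu)).2 from hh]
      · refine ⟨φ (h.symm y, γ), ?_, ?_⟩
        · have h1 := hφmaps (h.symm y) γ hγ
          rwa [h.apply_symm_apply] at h1
        · show (Ξ (y, φ (h.symm y, γ))).2 = γ
          have h1 := hΞ (h.symm y, γ)
          simp only [Homeomorph.apply_symm_apply] at h1
          exact congrArg Prod.snd h1
end
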